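/- arXiv:1601.01536 — 2 statements merged into one kernel-verified Lean document; each statement's English description precedes it below -/
import Mathlib

section
/- Let (V₀, ω₀), (V₁, ω₁), (V₂, ω₂) be finite-dimensional symplectic vector spaces over a field of characteristic ≠ 2. Let L₁ ⊆ V₀ × V₁ be Lagrangian with respect to (-ω₀) ⊕ ω₁ and L₂ ⊆ V₁ × V₂ be Lagrangian with respect to (-ω₁) ⊕ ω₂. Then the composed relation L₂ ∘ L₁ = {(v₀, v₂) : ∃ v₁ ∈ V₁, (v₀, v₁) ∈ L₁ and (v₁, v₂) ∈ L₂} is a Lagrangian subspace of V₀ × V₂ with respect to (-ω₀) ⊕ ω₂ (no transversality hypothesis is needed). -/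
/-- The symplectic orthogonal `L^ω = {v : ω(v,l) = 0 for all l ∈ L}` of a subspace. -/
def symplOrth {k V : Type*} [Field k] [AddCommGroup V] [Module k V]
    (ω : V →ₗ[k] V →ₗ[k] k) (L : Submodule k V) : Submodule k V where
  carrier := {v | ∀ l ∈ L, ω v l = 0}
  add_mem' := by
    intro a b ha hb l hl
    simp [map_add, ha l hl, hb l hl]
  zero_mem' := by
    intro l hl
    simp
  smul_mem' := by
    intro c a ha l hl
    simp [map_smul, ha l hl]

/-- A subspace is Lagrangian if it equals its symplectic orthogonal. -/
def IsLagrangian {k V : Type*} [Field k] [AddCommGroup V] [Module k V]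
    (ω : V →ₗ[k] V →ₗ[k] k) (L : Submodule k V) : Prop :=
  L = symplOrth ω L

/-- The direct sum form `ω₀ ⊕ ω₁` on `V₀ × V₁`. -/
def prodForm {k V₀ V₁ : Type*} [Field k] [AddCommGroup V₀] [Module k V₀]
    [AddCommGroup V₁] [Module k V₁]
    (ω₀ : V₀ →ₗ[k] V₀ →ₗ[k] k) (ω₁ : V₁ →ₗ[k] V₁ →ₗ[k] k) :
    (V₀ × V₁) →ₗ[k] (V₀ × V₁) →ₗ[k] k :=
  LinearMap.mk₂ k (fun u v => ω₀ u.1 v.1 + ω₁ u.2 v.2)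
    (fun u u' v => by simp [map_add]; ring)
    (fun c u v => by simp [map_smul]; ring)
    (fun u v v' => by simp [map_add]; ring)
    (fun c u v => by simp [map_smul]; ring)

/-- The composition of two linear relations `L₁ ⊆ V₀ × V₁`, `L₂ ⊆ V₁ × V₂`. -/
def lagComposeRel {k V₀ V₁ V₂ : Type*} [Field k]
    [AddCommGroup V₀] [Module k V₀] [AddCommGroup V₁] [Module k V₁]
    [AddCommGroup V₂] [Module k V₂]
    (L₁ : Submodule k (V₀ × V₁)) (L₂ : Submodule k (V₁ × V₂)) :
    Submodule k (V₀ × V₂) where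
  carrier := {p | ∃ v₁ : V₁, (p.1, v₁) ∈ L₁ ∧ (v₁, p.2) ∈ L₂}
  add_mem' := by
    rintro p q ⟨a, ha₁, ha₂⟩ ⟨b, hb₁, hb₂⟩
    exact ⟨a + b, L₁.add_mem ha₁ hb₁, L₂.add_mem ha₂ hb₂⟩
  zero_mem' := ⟨0, L₁.zero_mem, L₂.zero_mem⟩
  smul_mem' := by
    rintro c p ⟨a, ha₁, ha₂⟩
    exact ⟨c • a, L₁.smul_mem c ha₁, L₂.smul_mem c ha₂⟩

/-!
The composite `L = L₂ ∘ L₁` is isotropic: the isotropy identities of `L₁` and `L₂` at the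
witnesses `v`, `v'` add up, the `ω₁ v v'` terms cancelling. It remains to show
`2 dim L = dim V₀ + dim V₂`. Rank–nullity, applied to the fibre product `L₁ ×_{V₁} L₂` and to its
map `((a, v), (v, c)) ↦ (a, c)` onto `L`, gives `dim L + dim K + dim S = dim L₁ + dim L₂`, where
`S ⊆ V₁` is the sum of the projections of `L₁` and `L₂` to `V₁` and
`K = {v | (0, v) ∈ L₁ ∧ (v, 0) ∈ L₂}`. Because `L₁` and `L₂` are Lagrangian, `K = S^ω₁`, so
`dim K + dim S = dim V₁`; together with `2 dim L₁ = dim V₀ + dim V₁` and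
`2 dim L₂ = dim V₁ + dim V₂` this is the claim.
-/

open Module

section FinrankSubmodule

variable {k M M' : Type*} [Field k] [AddCommGroup M] [Module k M] [AddCommGroup M'] [Module k M']

lemma Submodule.finrank_prod_eq (p : Submodule k M) (q : Submodule k M')
    [FiniteDimensional k p] [FiniteDimensional k q] :
    finrank k (p.prod q) = finrank k p + finrank k q := by
  have hpq : p.prod q = LinearMap.range (p.subtype.prodMap q.subtype) := by
    rw [LinearMap.range_prodMap, p.range_subtype, q.range_subtype]
  rw [hpq, LinearMap.finrank_range_of_inj, Module.finrank_prod]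
  exact p.injective_subtype.prodMap q.injective_subtype

lemma Submodule.finrank_map_add_finrank_inf_ker (p : Submodule k M) [FiniteDimensional k p]
    (f : M →ₗ[k] M') : finrank k (p.map f) + finrank k ↥(p ⊓ LinearMap.ker f) = finrank k p := by
  rw [← LinearMap.finrank_range_add_finrank_ker (f.domRestrict p), LinearMap.range_domRestrict,
    LinearMap.ker_domRestrict, ← Submodule.finrank_map_subtype_eq, Submodule.map_comap_subtype]

end FinrankSubmodule

section SymplecticOrthogonal

variable {k V : Type*} [Field k] [AddCommGroup V] [Module k V]

@[simp]
lemma mem_symplOrth (ω : V →ₗ[k] V →ₗ[k] k) (L : Submodule k V) (v : V) :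
    v ∈ symplOrth ω L ↔ ∀ l ∈ L, ω v l = 0 := Iff.rfl

lemma symplOrth_eq_comap_dualAnnihilator (ω : V →ₗ[k] V →ₗ[k] k) (L : Submodule k V) :
    symplOrth ω L = L.dualAnnihilator.comap ω := by
  ext
  simp [Submodule.mem_dualAnnihilator]

@[simp]
lemma symplOrth_neg (ω : V →ₗ[k] V →ₗ[k] k) (L : Submodule k V) :
    symplOrth (-ω) L = symplOrth ω L := by
  ext v
  simp

lemma symplOrth_sup (ω : V →ₗ[k] V →ₗ[k] k) (A B : Submodule k V) :
    symplOrth ω (A ⊔ B) = symplOrth ω A ⊓ symplOrth ω B := by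
  simp only [symplOrth_eq_comap_dualAnnihilator, Submodule.dualAnnihilator_sup_eq,
    Submodule.comap_inf]

lemma finrank_add_finrank_symplOrth [FiniteDimensional k V] {ω : V →ₗ[k] V →ₗ[k] k}
    (hω : ω.SeparatingLeft) (L : Submodule k V) :
    finrank k L + finrank k (symplOrth ω L) = finrank k V := by
  let e := ω.linearEquivOfInjective (LinearMap.ker_eq_bot.mp
    (LinearMap.separatingLeft_iff_ker_eq_bot.mp hω)) Subspace.dual_finrank_eq.symm
  have he : (e : V →ₗ[k] Dual k V) = ω := rfl
  rw [symplOrth_eq_comap_dualAnnihilator, ← he, Submodule.comap_equiv_eq_map_symm,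
    LinearEquiv.finrank_map_eq]
  exact Subspace.finrank_add_finrank_dualAnnihilator_eq L

lemma IsLagrangian.le_symplOrth {ω : V →ₗ[k] V →ₗ[k] k} {L : Submodule k V}
    (hL : IsLagrangian ω L) : L ≤ symplOrth ω L :=
  hL.le

lemma IsLagrangian.finrank_add_finrank [FiniteDimensional k V] {ω : V →ₗ[k] V →ₗ[k] k}
    (hω : ω.SeparatingLeft) {L : Submodule k V} (hL : IsLagrangian ω L) :
    finrank k L + finrank k L = finrank k V := by
  conv_lhs => enter [2]; rw [hL]
  exact finrank_add_finrank_symplOrth hω L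

lemma isLagrangian_of_le_symplOrth [FiniteDimensional k V] {ω : V →ₗ[k] V →ₗ[k] k}
    (hω : ω.SeparatingLeft) {L : Submodule k V} (hiso : L ≤ symplOrth ω L)
    (hdim : finrank k V ≤ finrank k L + finrank k L) : IsLagrangian ω L :=
  Submodule.eq_of_le_of_finrank_le hiso (by have := finrank_add_finrank_symplOrth hω L; omega)

end SymplecticOrthogonal

section ProdForm

variable {k V₀ V₁ : Type*} [Field k] [AddCommGroup V₀] [Module k V₀]
  [AddCommGroup V₁] [Module k V₁]

@[simp]
lemma prodForm_apply (α : V₀ →ₗ[k] V₀ →ₗ[k] k) (β : V₁ →ₗ[k] V₁ →ₗ[k] k) (u v : V₀ × V₁) :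
    prodForm α β u v = α u.1 v.1 + β u.2 v.2 := rfl

lemma LinearMap.SeparatingLeft.neg {ω : V₀ →ₗ[k] V₀ →ₗ[k] k} (hω : ω.SeparatingLeft) :
    (-ω).SeparatingLeft :=
  fun v hv => hω v fun w => by simpa using hv w

lemma LinearMap.SeparatingLeft.prodForm {α : V₀ →ₗ[k] V₀ →ₗ[k] k} {β : V₁ →ₗ[k] V₁ →ₗ[k] k}
    (hα : α.SeparatingLeft) (hβ : β.SeparatingLeft) : (prodForm α β).SeparatingLeft :=
  fun v hv => Prod.ext (hα v.1 fun w => by simpa using hv (w, 0))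
    (hβ v.2 fun w => by simpa using hv (0, w))

lemma IsLagrangian.comap_inr {α : V₀ →ₗ[k] V₀ →ₗ[k] k} {β : V₁ →ₗ[k] V₁ →ₗ[k] k}
    {L : Submodule k (V₀ × V₁)} (hL : IsLagrangian (prodForm α β) L) :
    L.comap (LinearMap.inr k V₀ V₁) = symplOrth β (L.map (LinearMap.snd k V₀ V₁)) := by
  ext v
  rw [Submodule.mem_comap]
  nth_rewrite 1 [hL]
  simpa using forall_comm

lemma IsLagrangian.comap_inl {α : V₀ →ₗ[k] V₀ →ₗ[k] k} {β : V₁ →ₗ[k] V₁ →ₗ[k] k}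
    {L : Submodule k (V₀ × V₁)} (hL : IsLagrangian (prodForm α β) L) :
    L.comap (LinearMap.inl k V₀ V₁) = symplOrth α (L.map (LinearMap.fst k V₀ V₁)) := by
  ext v
  rw [Submodule.mem_comap]
  nth_rewrite 1 [hL]
  simp

lemma lagComposeRel_le_symplOrth {V₂ : Type*} [AddCommGroup V₂] [Module k V₂]
    {α : V₀ →ₗ[k] V₀ →ₗ[k] k} {β : V₁ →ₗ[k] V₁ →ₗ[k] k} {γ : V₂ →ₗ[k] V₂ →ₗ[k] k}
    {L₁ : Submodule k (V₀ × V₁)} {L₂ : Submodule k (V₁ × V₂)}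
    (h₁ : L₁ ≤ symplOrth (prodForm α β) L₁) (h₂ : L₂ ≤ symplOrth (prodForm (-β) γ) L₂) :
    lagComposeRel L₁ L₂ ≤ symplOrth (prodForm α γ) (lagComposeRel L₁ L₂) := by
  rintro p ⟨v, hpv, hvp⟩ q ⟨w, hqw, hwq⟩
  have e₁ := h₁ hpv _ hqw
  have e₂ := h₂ hvp _ hwq
  simp only [prodForm_apply, LinearMap.neg_apply] at e₁ e₂ ⊢
  linear_combination e₁ + e₂

end ProdForm

section Composition

variable {k V₀ V₁ V₂ : Type*} [Field k] [AddCommGroup V₀] [Module k V₀]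
  [AddCommGroup V₁] [Module k V₁] [AddCommGroup V₂] [Module k V₂]

/-- The fibre product `L₁ ×_{V₁} L₂ = {((a, v), (v, c))}` inside `(V₀ × V₁) × (V₁ × V₂)`. -/
def relFibreProd (L₁ : Submodule k (V₀ × V₁)) (L₂ : Submodule k (V₁ × V₂)) :
    Submodule k ((V₀ × V₁) × (V₁ × V₂)) :=
  L₁.prod L₂ ⊓ LinearMap.ker ((LinearMap.snd k V₀ V₁).coprod (-LinearMap.fst k V₁ V₂))

lemma lagComposeRel_eq_map_relFibreProd (L₁ : Submodule k (V₀ × V₁))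
    (L₂ : Submodule k (V₁ × V₂)) :
    lagComposeRel L₁ L₂ =
      (relFibreProd L₁ L₂).map ((LinearMap.fst k V₀ V₁).prodMap (LinearMap.snd k V₁ V₂)) := by
  ext ⟨a, c⟩
  constructor
  · rintro ⟨v, hav, hvc⟩
    exact ⟨((a, v), (v, c)), ⟨⟨hav, hvc⟩, by simp⟩, rfl⟩
  · rintro ⟨⟨⟨a', v⟩, ⟨v', c'⟩⟩, ⟨⟨hav, hvc⟩, hvv⟩, hac⟩
    obtain ⟨rfl, rfl⟩ : a' = a ∧ c' = c := by simpa using hac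
    obtain rfl : v = v' := by simpa [add_neg_eq_zero] using hvv
    exact ⟨v, hav, hvc⟩

lemma relFibreProd_inf_ker (L₁ : Submodule k (V₀ × V₁)) (L₂ : Submodule k (V₁ × V₂)) :
    relFibreProd L₁ L₂ ⊓ LinearMap.ker ((LinearMap.fst k V₀ V₁).prodMap (LinearMap.snd k V₁ V₂)) =
      (L₁.comap (LinearMap.inr k V₀ V₁) ⊓ L₂.comap (LinearMap.inl k V₁ V₂)).map
        ((LinearMap.inr k V₀ V₁).prod (LinearMap.inl k V₁ V₂)) := by
  ext ⟨⟨a, v⟩, ⟨v', c⟩⟩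
  simp only [relFibreProd, Submodule.mem_inf, Submodule.mem_prod, LinearMap.mem_ker,
    Submodule.mem_map, Submodule.mem_comap]
  constructor
  · rintro ⟨⟨⟨hav, hvc⟩, hvv⟩, hac⟩
    obtain ⟨rfl, rfl⟩ : a = 0 ∧ c = 0 := by simpa using hac
    obtain rfl : v = v' := by simpa [add_neg_eq_zero] using hvv
    exact ⟨v, ⟨hav, hvc⟩, rfl⟩
  · rintro ⟨w, ⟨hw₁, hw₂⟩, hw⟩
    obtain ⟨⟨rfl, rfl⟩, rfl, rfl⟩ : (0 = a ∧ w = v) ∧ w = v' ∧ 0 = c := by simpa using hw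
    exact ⟨⟨⟨hw₁, hw₂⟩, by simp⟩, by simp⟩

lemma finrank_lagComposeRel_add [FiniteDimensional k V₀] [FiniteDimensional k V₁]
    [FiniteDimensional k V₂] (L₁ : Submodule k (V₀ × V₁)) (L₂ : Submodule k (V₁ × V₂)) :
    finrank k (lagComposeRel L₁ L₂) +
        finrank k ↥(L₁.comap (LinearMap.inr k V₀ V₁) ⊓ L₂.comap (LinearMap.inl k V₁ V₂)) +
        finrank k ↥(L₁.map (LinearMap.snd k V₀ V₁) ⊔ L₂.map (LinearMap.fst k V₁ V₂)) =
      finrank k L₁ + finrank k L₂ := by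
  have hfibre := (L₁.prod L₂).finrank_map_add_finrank_inf_ker
    ((LinearMap.snd k V₀ V₁).coprod (-LinearMap.fst k V₁ V₂))
  rw [LinearMap.map_coprod_prod, Submodule.map_neg, Submodule.finrank_prod_eq] at hfibre
  have hcomp := (relFibreProd L₁ L₂).finrank_map_add_finrank_inf_ker
    ((LinearMap.fst k V₀ V₁).prodMap (LinearMap.snd k V₁ V₂))
  have hδ : Function.Injective ((LinearMap.inr k V₀ V₁).prod (LinearMap.inl k V₁ V₂)) :=
    fun v w h => LinearMap.inr_injective (congrArg Prod.fst h)
  rw [← lagComposeRel_eq_map_relFibreProd, relFibreProd_inf_ker,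
    ← (Submodule.equivMapOfInjective _ hδ _).finrank_eq] at hcomp
  unfold relFibreProd at hcomp
  omega

end Composition

lemma finrank_lagComposeRel_add_finrank_of_isLagrangian {k V₀ V₁ V₂ : Type*} [Field k]
    [AddCommGroup V₀] [Module k V₀] [FiniteDimensional k V₀]
    [AddCommGroup V₁] [Module k V₁] [FiniteDimensional k V₁]
    [AddCommGroup V₂] [Module k V₂] [FiniteDimensional k V₂]
    {α : V₀ →ₗ[k] V₀ →ₗ[k] k} {ω : V₁ →ₗ[k] V₁ →ₗ[k] k} {γ : V₂ →ₗ[k] V₂ →ₗ[k] k}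
    (hω : ω.SeparatingLeft) {L₁ : Submodule k (V₀ × V₁)} {L₂ : Submodule k (V₁ × V₂)}
    (hL₁ : IsLagrangian (prodForm α ω) L₁) (hL₂ : IsLagrangian (prodForm (-ω) γ) L₂) :
    finrank k (lagComposeRel L₁ L₂) + finrank k V₁ = finrank k L₁ + finrank k L₂ := by
  have h := finrank_lagComposeRel_add L₁ L₂
  rw [hL₁.comap_inr, hL₂.comap_inl, symplOrth_neg, ← symplOrth_sup] at h
  have := finrank_add_finrank_symplOrth hω
    (L₁.map (LinearMap.snd k V₀ V₁) ⊔ L₂.map (LinearMap.fst k V₁ V₂))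
  omega

theorem compRel_isLagrangian_general {k V₀ V₁ V₂ : Type*} [Field k]
    [AddCommGroup V₀] [Module k V₀] [FiniteDimensional k V₀]
    [AddCommGroup V₁] [Module k V₁] [FiniteDimensional k V₁]
    [AddCommGroup V₂] [Module k V₂] [FiniteDimensional k V₂]
    (ω₀ : V₀ →ₗ[k] V₀ →ₗ[k] k) (ω₁ : V₁ →ₗ[k] V₁ →ₗ[k] k) (ω₂ : V₂ →ₗ[k] V₂ →ₗ[k] k)
    (hnondeg₀ : ∀ v, (∀ w, ω₀ v w = 0) → v = 0)
    (hnondeg₁ : ∀ v, (∀ w, ω₁ v w = 0) → v = 0)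
    (hnondeg₂ : ∀ v, (∀ w, ω₂ v w = 0) → v = 0)
    (L₁ : Submodule k (V₀ × V₁)) (L₂ : Submodule k (V₁ × V₂))
    (hL₁ : IsLagrangian (prodForm (-ω₀) ω₁) L₁)
    (hL₂ : IsLagrangian (prodForm (-ω₁) ω₂) L₂) :
    IsLagrangian (prodForm (-ω₀) ω₂) (lagComposeRel L₁ L₂) := by
  have hω₀ : (-ω₀).SeparatingLeft := LinearMap.SeparatingLeft.neg hnondeg₀
  have hω₁ : (-ω₁).SeparatingLeft := LinearMap.SeparatingLeft.neg hnondeg₁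
  have hdim₁ := hL₁.finrank_add_finrank (hω₀.prodForm hnondeg₁)
  have hdim₂ := hL₂.finrank_add_finrank (hω₁.prodForm hnondeg₂)
  have hdim := finrank_lagComposeRel_add_finrank_of_isLagrangian hnondeg₁ hL₁ hL₂
  refine isLagrangian_of_le_symplOrth (hω₀.prodForm hnondeg₂)
    (lagComposeRel_le_symplOrth hL₁.le_symplOrth hL₂.le_symplOrth) ?_
  rw [Module.finrank_prod] at hdim₁ hdim₂ ⊢
  omega

/-- Composition of Lagrangian correspondences is Lagrangian, with no
transversality hypothesis. -/
theorem compRel_isLagrangian {k V₀ V₁ V₂ : Type*} [Field k]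
    [AddCommGroup V₀] [Module k V₀] [FiniteDimensional k V₀]
    [AddCommGroup V₁] [Module k V₁] [FiniteDimensional k V₁]
    [AddCommGroup V₂] [Module k V₂] [FiniteDimensional k V₂]
    (h2 : (2 : k) ≠ 0)
    (ω₀ : V₀ →ₗ[k] V₀ →ₗ[k] k) (ω₁ : V₁ →ₗ[k] V₁ →ₗ[k] k) (ω₂ : V₂ →ₗ[k] V₂ →ₗ[k] k)
    (halt₀ : ∀ v, ω₀ v v = 0) (hnondeg₀ : ∀ v, (∀ w, ω₀ v w = 0) → v = 0)
    (halt₁ : ∀ v, ω₁ v v = 0) (hnondeg₁ : ∀ v, (∀ w, ω₁ v w = 0) → v = 0)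
    (halt₂ : ∀ v, ω₂ v v = 0) (hnondeg₂ : ∀ v, (∀ w, ω₂ v w = 0) → v = 0)
    (L₁ : Submodule k (V₀ × V₁)) (L₂ : Submodule k (V₁ × V₂))
    (hL₁ : IsLagrangian (prodForm (-ω₀) ω₁) L₁)
    (hL₂ : IsLagrangian (prodForm (-ω₁) ω₂) L₂) :
    IsLagrangian (prodForm (-ω₀) ω₂) (lagComposeRel L₁ L₂) :=
  compRel_isLagrangian_general ω₀ ω₁ ω₂ hnondeg₀ hnondeg₁ hnondeg₂ L₁ L₂ hL₁ hL₂
end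

section
/- Let S and T be sets each equipped with an involution ι (ι ∘ ι = id) and a degree function |·| : S → ℤ invariant under ι. Define S ⊗ T as the quotient of S × T by the equivalence relation generated by (ι s, t) ∼ (s, ι t). Then: (1) the map σ : S ⊗ T → T ⊗ S sending the class of (s, t) to the class of (t, s) if |s|·|t| is even and to the class of (ι t, s) if |s|·|t| is odd, is well-defined; and (2) σ_{T,S} ∘ σ_{S,T} = id_{S ⊗ T}. -/
/-- The relation whose equivalence closure defines the tensor product `S ⊗ T`
of graded sets with involution: `(ι s, t) ∼ (s, ι t)`. -/
def tensorRel {S T : Type*} (ιS : S → S) (ιT : T → T) : S × T → S × T → Prop :=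
  fun p q => ∃ s t, p = (ιS s, t) ∧ q = (s, ιT t)

lemma sigma_sound {S T : Type*}
    (ιS : S → S) (ιT : T → T) (dS : S → ℤ) (dT : T → ℤ)
    (hdS : ∀ s, dS (ιS s) = dS s) (hdT : ∀ t, dT (ιT t) = dT t)
    (p q : S × T) (h : tensorRel ιS ιT p q) :
    (if Even (dS p.1 * dT p.2) then Quot.mk (tensorRel ιT ιS) (p.2, p.1)
      else Quot.mk (tensorRel ιT ιS) (ιT p.2, p.1)) =
    (if Even (dS q.1 * dT q.2) then Quot.mk (tensorRel ιT ιS) (q.2, q.1)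
      else Quot.mk (tensorRel ιT ιS) (ιT q.2, q.1)) := by
  obtain ⟨s, t, rfl, rfl⟩ := h
  simp only [hdS, hdT]
  by_cases he : Even (dS s * dT t)
  · simp only [he, if_true]
    exact (Quot.sound ⟨t, s, rfl, rfl⟩).symm
  · simp only [he, if_false]
    exact (Quot.sound ⟨ιT t, s, rfl, rfl⟩).symm

/-- The symmetry constraint of the symmetric monoidal category `gr-Inv`:
`σ : S ⊗ T → T ⊗ S`, `[s,t] ↦ (-1)^{|s||t|} [t,s]`, is well-defined, and
`σ_{T,S} ∘ σ_{S,T} = id`. -/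
theorem grInv_symmetry {S T : Type*}
    (ιS : S → S) (ιT : T → T) (dS : S → ℤ) (dT : T → ℤ)
    (hιS : ∀ s, ιS (ιS s) = s) (hιT : ∀ t, ιT (ιT t) = t)
    (hdS : ∀ s, dS (ιS s) = dS s) (hdT : ∀ t, dT (ιT t) = dT t) :
    ∃ (σ₁ : Quot (tensorRel ιS ιT) → Quot (tensorRel ιT ιS))
      (σ₂ : Quot (tensorRel ιT ιS) → Quot (tensorRel ιS ιT)),
      (∀ s t, σ₁ (Quot.mk _ (s, t)) =
        if Even (dS s * dT t) then Quot.mk _ (t, s) else Quot.mk _ (ιT t, s)) ∧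
      (∀ t s, σ₂ (Quot.mk _ (t, s)) =
        if Even (dT t * dS s) then Quot.mk _ (s, t) else Quot.mk _ (ιS s, t)) ∧
      σ₂ ∘ σ₁ = id := by
  refine ⟨Quot.lift _ (sigma_sound ιS ιT dS dT hdS hdT),
          Quot.lift _ (sigma_sound ιT ιS dT dS hdT hdS),
          fun s t => rfl, fun t s => rfl, ?_⟩
  funext x
  induction x using Quot.ind with
  | _ p => ?_
  obtain ⟨s, t⟩ := p
  by_cases he : Even (dS s * dT t)
  · have he' : Even (dT t * dS s) := by rwa [mul_comm]
    simp [Quot.lift, he, he']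
  · have he' : ¬ Even (dT (ιT t) * dS s) := by rw [hdT, mul_comm]; exact he
    simp only [Function.comp_apply, id_eq, he, if_false]
    show (if Even (dT (ιT t) * dS s) then Quot.mk (tensorRel ιS ιT) (s, ιT t)
        else Quot.mk (tensorRel ιS ιT) (ιS s, ιT t)) = Quot.mk (tensorRel ιS ιT) (s, t)
    rw [if_neg he']
    exact Quot.sound ⟨s, ιT t, rfl, by rw [hιT]⟩
end
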